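/- arXiv:1705.07665 — 4 statements merged into one kernel-verified Lean document; each statement's English description precedes it below -/
import Mathlib

section
/- If G is an infinite, finitely generated, elementary amenable group, then G has a subgroup of finite index which admits a surjective group homomorphism onto ℤ. -/
/-!
Closure under subgroups and quotients is automatic for the class generated from abelian and finite
groups by extensions and directed unions alone, so that class already contains every elementary
amenable group. Induct over it, proving that every infinite finitely generated subgroup `K` has a
finite-index subgroup mapping onto `ℤ`. For an extension `N → G → G ⧸ N`, either the image of `K`
in `G ⧸ N` is infinite, and we pull back from there, or `K ∩ N` has finite index in `K`, hence is
again finitely generated and infinite. A finitely generated subgroup of a directed union lies in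
one of its members, and an infinite finitely generated abelian group surjects onto `ℤ` by the
structure theorem.
-/

universe u

/-- The class of elementary amenable groups: the smallest class of groups containing all
abelian groups and all finite groups and closed under taking subgroups (more generally,
injective images), quotients (more generally, surjective images), extensions and directed
unions (inductive limits). -/
inductive ElementaryAmenable : ∀ (G : Type u) [Group G], Prop
  | of_comm (G : Type u) [Group G] (h : ∀ a b : G, a * b = b * a) : ElementaryAmenable G
  | of_finite (G : Type u) [Group G] (h : Finite G) : ElementaryAmenable G
  | of_injective (G H : Type u) [Group G] [Group H] (f : G →* H)
      (hf : Function.Injective f) (hH : ElementaryAmenable H) : ElementaryAmenable G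
  | of_surjective (G H : Type u) [Group G] [Group H] (f : G →* H)
      (hf : Function.Surjective f) (hG : ElementaryAmenable G) : ElementaryAmenable H
  | of_extension (G : Type u) [Group G] (N : Subgroup G) (hN : N.Normal)
      (h₁ : ElementaryAmenable N) (h₂ : ElementaryAmenable (G ⧸ N)) : ElementaryAmenable G
  | of_directed_union (G : Type u) [Group G] {ι : Type u} (S : ι → Subgroup G)
      (hdir : Directed (· ≤ ·) S) (hunion : ∀ g : G, ∃ i, g ∈ S i)
      (h : ∀ i, ElementaryAmenable (S i)) : ElementaryAmenable G

open Function DirectSum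

theorem AddCommGroup.exists_surjective_int (A : Type*) [AddCommGroup A] [AddGroup.FG A]
    [Infinite A] : ∃ f : A →+ ℤ, Surjective f := by
  obtain ⟨n, ι, _, p, hp, e, ⟨eqv⟩⟩ := AddCommGroup.equiv_free_prod_directSum_zmod A
  cases n with
  | zero =>
    have : ∀ i, NeZero (p i ^ e i) := fun i => ⟨pow_ne_zero _ (hp i).ne_zero⟩
    have : Finite (⨁ i, ZMod (p i ^ e i)) := .of_equiv _ DFinsupp.equivFunOnFintype.symm
    have := Finite.of_equiv _ eqv.symm.toEquiv
    exact (not_finite A).elim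
  | succ n =>
    exact ⟨(Finsupp.applyAddHom 0).comp ((AddMonoidHom.fst _ _).comp eqv.toAddMonoidHom),
      fun z => ⟨eqv.symm (Finsupp.single 0 z, 0), by simp⟩⟩

theorem QuotientGroup.map_comap_injective {G H : Type*} [Group G] [Group H] (f : G →* H)
    (N : Subgroup H) [N.Normal] : Injective (QuotientGroup.map (N.comap f) N f le_rfl) := by
  intro a b h
  induction a using QuotientGroup.induction_on
  induction b using QuotientGroup.induction_on
  simpa [QuotientGroup.eq] using h

theorem MonoidHom.exists_range_le_of_directed {K G ι : Type*} [Group K] [Group G] [Group.FG K]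
    (f : K →* G) (S : ι → Subgroup G) (hdir : Directed (· ≤ ·) S)
    (hunion : ∀ g : G, ∃ i, g ∈ S i) : ∃ i, f.range ≤ S i := by
  classical
  obtain ⟨T, hT⟩ := Group.FG.out (G := K)
  choose idx hidx using fun k : K => hunion (f k)
  have : Nonempty ι := ⟨idx 1⟩
  obtain ⟨i, hi⟩ := hdir.finset_le (T.image idx)
  refine ⟨i, ?_⟩
  rw [MonoidHom.range_eq_map, ← hT, MonoidHom.map_closure, Subgroup.closure_le]
  rintro _ ⟨t, ht, rfl⟩
  exact hi _ (Finset.mem_image_of_mem idx ht) (hidx t)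

theorem MonoidHom.subgroupComap_injective {G H : Type*} [Group G] [Group H] {f : G →* H}
    (hf : Injective f) (N : Subgroup H) : Injective (f.subgroupComap N) :=
  fun _ _ h => Subtype.ext (hf (congrArg Subtype.val h))

theorem Subgroup.infinite_of_finiteIndex {G : Type*} [Group G] [Infinite G] (H : Subgroup G)
    [H.FiniteIndex] : Infinite H := by
  by_contra hfin
  have := not_infinite_iff_finite.1 hfin
  have := H.finite_iff_finite_and_finiteIndex.2 ⟨this, ‹_›⟩
  exact not_finite G

def IsIndicable (G : Type*) [Group G] : Prop :=
  ∃ f : G →* Multiplicative ℤ, Surjective f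

def IsVirtuallyIndicable (G : Type*) [Group G] : Prop :=
  ∃ H : Subgroup G, H.FiniteIndex ∧ IsIndicable H

theorem CommGroup.isIndicable_of_infinite (G : Type*) [CommGroup G] [Group.FG G] [Infinite G] :
    IsIndicable G := by
  have : AddGroup.FG (Additive G) := GroupFG.iff_add_fg.mp ‹_›
  obtain ⟨f, hf⟩ := AddCommGroup.exists_surjective_int (Additive G)
  exact ⟨AddMonoidHom.toMultiplicativeRight f, hf⟩

section

variable {G H : Type*} [Group G] [Group H]

theorem IsIndicable.of_surjective (f : G →* H) (hf : Surjective f) (hH : IsIndicable H) :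
    IsIndicable G :=
  let ⟨g, hg⟩ := hH
  ⟨g.comp f, hg.comp hf⟩

theorem IsVirtuallyIndicable.of_isIndicable (hG : IsIndicable G) : IsVirtuallyIndicable G :=
  let e : (⊤ : Subgroup G) ≃* G := Subgroup.topEquiv
  ⟨⊤, inferInstance, hG.of_surjective e.toMonoidHom e.surjective⟩

theorem IsVirtuallyIndicable.of_surjective (f : G →* H) (hf : Surjective f)
    (hH : IsVirtuallyIndicable H) : IsVirtuallyIndicable G := by
  obtain ⟨H₀, hH₀, hind⟩ := hH
  refine ⟨H₀.comap f, ⟨?_⟩,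
    hind.of_surjective _ (f.subgroupComap_surjective_of_surjective H₀ hf)⟩
  rw [Subgroup.index_comap_of_surjective _ hf]
  exact hH₀.index_ne_zero

theorem IsVirtuallyIndicable.of_finiteIndex {M : Subgroup G} [M.FiniteIndex]
    (hM : IsVirtuallyIndicable M) : IsVirtuallyIndicable G := by
  obtain ⟨H₀, hH₀, hind⟩ := hM
  let e := H₀.equivMapOfInjective M.subtype M.subtype_injective
  refine ⟨H₀.map M.subtype, ⟨?_⟩, hind.of_surjective e.symm.toMonoidHom e.symm.surjective⟩
  rw [Subgroup.index_map_subtype]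
  exact mul_ne_zero hH₀.index_ne_zero Subgroup.FiniteIndex.index_ne_zero

end

/-- Chou's description of the class of elementary amenable groups. -/
inductive ChouElementaryAmenable : ∀ (G : Type u) [Group G], Prop
  | of_comm (G : Type u) [Group G] (h : ∀ a b : G, a * b = b * a) : ChouElementaryAmenable G
  | of_finite (G : Type u) [Group G] (h : Finite G) : ChouElementaryAmenable G
  | of_extension (G : Type u) [Group G] (N : Subgroup G) (hN : N.Normal)
      (h₁ : ChouElementaryAmenable N) (h₂ : ChouElementaryAmenable (G ⧸ N)) :
      ChouElementaryAmenable G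
  | of_directed_union (G : Type u) [Group G] {ι : Type u} (S : ι → Subgroup G)
      (hdir : Directed (· ≤ ·) S) (hunion : ∀ g : G, ∃ i, g ∈ S i)
      (h : ∀ i, ChouElementaryAmenable (S i)) : ChouElementaryAmenable G

namespace ChouElementaryAmenable

theorem of_injective {G H : Type u} [Group G] [Group H] (hH : ChouElementaryAmenable H)
    (f : G →* H) (hf : Injective f) : ChouElementaryAmenable G := by
  induction hH generalizing G with
  | of_comm H hcomm => exact of_comm G fun a b => hf (by rw [map_mul, map_mul, hcomm])
  | of_finite H _ => exact of_finite G (Finite.of_injective f hf)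
  | of_extension H N _ _ _ ihN ihQ =>
    exact of_extension G (N.comap f) inferInstance (ihN _ (f.subgroupComap_injective hf N))
      (ihQ _ (QuotientGroup.map_comap_injective f N))
  | of_directed_union H S hdir hunion _ ih =>
    exact of_directed_union G (fun i => (S i).comap f)
      (hdir.mono_comp _ (g := Subgroup.comap f) fun _ _ => Subgroup.comap_mono)
      (fun g => hunion (f g)) fun i => ih i _ (f.subgroupComap_injective hf (S i))

theorem of_surjective {G H : Type u} [Group G] [Group H] (hG : ChouElementaryAmenable G)
    (f : G →* H) (hf : Surjective f) : ChouElementaryAmenable H := by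
  induction hG generalizing H with
  | of_comm G hcomm =>
    refine of_comm H fun a b => ?_
    obtain ⟨a, rfl⟩ := hf a
    obtain ⟨b, rfl⟩ := hf b
    rw [← map_mul, ← map_mul, hcomm]
  | of_finite G _ => exact of_finite H (Finite.of_surjective f hf)
  | of_extension G N hN _ _ ihN ihQ =>
    have := hN.map f hf
    exact of_extension H (N.map f) this (ihN _ (f.subgroupMap_surjective N))
      (ihQ _ (QuotientGroup.map_surjective_of_surjective N _ f
        ((QuotientGroup.mk'_surjective (N.map f)).comp hf) (Subgroup.le_comap_map f N)))
  | of_directed_union G S hdir hunion _ ih =>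
    refine of_directed_union H (fun i => (S i).map f)
      (hdir.mono_comp _ (g := Subgroup.map f) fun _ _ => Subgroup.map_mono) (fun y => ?_)
      fun i => ih i _ (f.subgroupMap_surjective (S i))
    obtain ⟨g, rfl⟩ := hf y
    obtain ⟨i, hi⟩ := hunion g
    exact ⟨i, Subgroup.mem_map_of_mem f hi⟩

end ChouElementaryAmenable

theorem ElementaryAmenable.chouElementaryAmenable {G : Type u} [Group G]
    (hG : ElementaryAmenable G) : ChouElementaryAmenable G := by
  induction hG with
  | of_comm G h => exact .of_comm G h
  | of_finite G h => exact .of_finite G h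
  | of_injective G H f hf _ ih => exact ih.of_injective f hf
  | of_surjective G H f hf _ ih => exact ih.of_surjective f hf
  | of_extension G N hN _ _ ihN ihQ => exact .of_extension G N hN ihN ihQ
  | of_directed_union G S hdir hunion _ ih => exact .of_directed_union G S hdir hunion ih

theorem ChouElementaryAmenable.isVirtuallyIndicable_of_injective {G : Type u} [Group G]
    (hG : ChouElementaryAmenable G) {K : Type u} [Group K] [Group.FG K] [Infinite K]
    (f : K →* G) (hf : Injective f) : IsVirtuallyIndicable K := by
  induction hG generalizing K with
  | of_comm G hcomm =>
    let _ : CommGroup K := { mul_comm := fun a b => hf (by rw [map_mul, map_mul, hcomm]) }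
    exact .of_isIndicable (CommGroup.isIndicable_of_infinite K)
  | of_finite G _ =>
    have := Finite.of_injective f hf
    exact (not_finite K).elim
  | of_extension G N _ _ _ ihN ihQ =>
    by_cases hM : (N.comap f).FiniteIndex
    · have := (N.comap f).infinite_of_finiteIndex
      exact .of_finiteIndex (ihN _ (f.subgroupComap_injective hf N))
    · have : Infinite (K ⧸ N.comap f) := by
        rwa [Subgroup.finiteIndex_iff, not_ne_iff, Subgroup.index_eq_zero_iff_infinite] at hM
      exact .of_surjective _ (QuotientGroup.mk'_surjective _)
        (ihQ _ (QuotientGroup.map_comap_injective f N))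
  | of_directed_union G S hdir hunion _ ih =>
    obtain ⟨i, hi⟩ := f.exists_range_le_of_directed S hdir hunion
    exact ih i (f.codRestrict (S i) fun k => hi ⟨k, rfl⟩) fun a b h =>
      hf (congrArg Subtype.val h)

/-- Hillman's lemma: an infinite, finitely generated, elementary amenable group has a
finite-index subgroup admitting a surjective homomorphism onto `ℤ`. -/
theorem exists_finiteIndex_subgroup_surjective_onto_int
    (G : Type u) [Group G] [Infinite G] (hfg : Group.FG G) (hEA : ElementaryAmenable G) :
    ∃ H : Subgroup G, H.FiniteIndex ∧
      ∃ f : H →* Multiplicative ℤ, Function.Surjective f :=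
  hEA.chouElementaryAmenable.isVirtuallyIndicable_of_injective (K := G) (MonoidHom.id G)
    injective_id
end

section
/- Let n ≥ 4, let ρ : S_n → ℂ ⊕ M_n(ℂ) be the direct sum of the trivial representation and the permutation representation. Then the *-algebra generated by ρ(A_n) equals the *-algebra generated by ρ(S_n), where A_n is the alternating group (the commutator subgroup of S_n). -/
/-!
Since `Aₙ` has index two in `Sₙ`, it suffices that `ρ(τ)` lies in the algebra generated by `ρ(Aₙ)`
for a single transposition `τ`. It even lies in the linear span of `ρ(A₄)`: comparing rows, for
distinct `a, b, c, d` the permutation matrices satisfy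
`2 P₍a b₎ = 1 - P₍b d c₎ + P₍a b₎₍c d₎ + P₍a b d₎ + P₍a c b₎ - P₍a c d₎`,
and the coefficients on the right sum to `2`, so the identity also holds on the trivial summand.
-/

open Equiv Equiv.Perm

variable {α R : Type*} [DecidableEq α]

theorem swap_mul_swap_mem_alternatingGroup [Fintype α] {a b c d : α} (hab : a ≠ b)
    (hcd : c ≠ d) : swap a b * swap c d ∈ alternatingGroup α := by
  simp [mem_alternatingGroup, sign_swap hab, sign_swap hcd]

theorem two_nsmul_permMatrix_swap [Ring R] {a b c d : α} (hab : a ≠ b) (hac : a ≠ c)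
    (had : a ≠ d) (hbc : b ≠ c) (hbd : b ≠ d) (hcd : c ≠ d) :
    2 • (swap a b).permMatrix R = 1 - (swap b d * swap d c).permMatrix R
      + (swap a b * swap c d).permMatrix R + (swap a b * swap b d).permMatrix R
      + (swap a c * swap c b).permMatrix R - (swap a c * swap c d).permMatrix R := by
  rw [← Matrix.permMatrix_one]
  ext i j
  simp only [Matrix.add_apply, Matrix.sub_apply, Matrix.smul_apply,
    PEquiv.toMatrix_toPEquiv_apply, Perm.mul_apply, Perm.one_apply]
  obtain rfl | rfl | rfl | rfl | ⟨hia, hib, hic, hid⟩ :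
      i = a ∨ i = b ∨ i = c ∨ i = d ∨ (i ≠ a ∧ i ≠ b ∧ i ≠ c ∧ i ≠ d) := by tauto
  all_goals
    simp only [swap_apply_left, swap_apply_right, swap_apply_of_ne_of_ne, *, hab.symm, hac.symm,
      had.symm, hbc.symm, hbd.symm, hcd.symm, ne_eq, not_false_eq_true]
    abel

variable (R) in
def trivialProdPermMatrix [Zero R] [One R] (σ : Perm α) : R × Matrix α α R :=
  (1, σ.permMatrix R)

theorem trivialProdPermMatrix_mul [Fintype α] [Semiring R] (σ τ : Perm α) :
    trivialProdPermMatrix R (σ * τ) = trivialProdPermMatrix R τ * trivialProdPermMatrix R σ :=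
  Prod.ext (mul_one 1).symm (Matrix.permMatrix_mul σ τ)

theorem two_nsmul_trivialProdPermMatrix_swap [Ring R] {a b c d : α} (hab : a ≠ b) (hac : a ≠ c)
    (had : a ≠ d) (hbc : b ≠ c) (hbd : b ≠ d) (hcd : c ≠ d) :
    2 • trivialProdPermMatrix R (swap a b) = trivialProdPermMatrix R 1
      - trivialProdPermMatrix R (swap b d * swap d c)
      + trivialProdPermMatrix R (swap a b * swap c d)
      + trivialProdPermMatrix R (swap a b * swap b d)
      + trivialProdPermMatrix R (swap a c * swap c b)
      - trivialProdPermMatrix R (swap a c * swap c d) :=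
  Prod.ext (by simp only [trivialProdPermMatrix, Prod.fst_add, Prod.fst_sub, Prod.smul_fst]; abel)
    (by simpa only [trivialProdPermMatrix, Prod.snd_add, Prod.snd_sub, Prod.smul_snd,
      Matrix.permMatrix_one] using
      two_nsmul_permMatrix_swap (R := R) hab hac had hbc hbd hcd)

theorem trivialProdPermMatrix_swap_mem_span [Fintype α] [CommRing R] [Invertible (2 : R)]
    {a b c d : α} (hab : a ≠ b) (hac : a ≠ c) (had : a ≠ d) (hbc : b ≠ c) (hbd : b ≠ d)
    (hcd : c ≠ d) :
    trivialProdPermMatrix R (swap a b) ∈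
      Submodule.span R (trivialProdPermMatrix R '' alternatingGroup α) := by
  have mem_span {σ : Perm α} (hσ : σ ∈ alternatingGroup α) :
      trivialProdPermMatrix R σ ∈
        Submodule.span R (trivialProdPermMatrix R '' alternatingGroup α) :=
    Submodule.subset_span ⟨σ, hσ, rfl⟩
  rw [← invOf_smul_smul (2 : R) (trivialProdPermMatrix R (swap a b)), ofNat_smul_eq_nsmul,
    two_nsmul_trivialProdPermMatrix_swap hab hac had hbc hbd hcd]
  exact Submodule.smul_mem _ _ <| sub_mem (add_mem (add_mem (add_mem (sub_mem
    (mem_span (one_mem _))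
    (mem_span (swap_mul_swap_mem_alternatingGroup hbd hcd.symm)))
    (mem_span (swap_mul_swap_mem_alternatingGroup hab hcd)))
    (mem_span (swap_mul_swap_mem_alternatingGroup hab hbd)))
    (mem_span (swap_mul_swap_mem_alternatingGroup hac hbc.symm)))
    (mem_span (swap_mul_swap_mem_alternatingGroup hac hcd))

theorem trivialProdPermMatrix_mem_of_image_alternatingGroup_subset [Fintype α] [CommRing R]
    [Invertible (2 : R)] (hα : 4 ≤ Fintype.card α) {S : Subalgebra R (R × Matrix α α R)}
    (hS : trivialProdPermMatrix R '' alternatingGroup α ⊆ (S : Set (R × Matrix α α R)))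
    (σ : Perm α) :
    trivialProdPermMatrix R σ ∈ S := by
  obtain ⟨e⟩ : Nonempty (Fin 4 ↪ α) := Function.Embedding.nonempty_of_card_le (by simpa using hα)
  have he {i j : Fin 4} (hij : i ≠ j) : e i ≠ e j := e.injective.ne hij
  set τ := swap (e 0) (e 1)
  have hτ : trivialProdPermMatrix R τ ∈ S := by
    refine (Submodule.span_le (p := Subalgebra.toSubmodule S)).mpr hS ?_
    exact trivialProdPermMatrix_swap_mem_span (c := e 2) (d := e 3) (he (by decide))
      (he (by decide)) (he (by decide)) (he (by decide)) (he (by decide)) (he (by decide))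
  by_cases hσ : σ ∈ alternatingGroup α
  · exact hS ⟨σ, hσ, rfl⟩
  have hτσ : τ * σ ∈ alternatingGroup α := by
    rw [mem_alternatingGroup] at hσ ⊢
    rw [Perm.sign_mul, sign_swap (he (by decide)), neg_one_mul, neg_eq_iff_eq_neg,
      ← Int.units_ne_iff_eq_neg]
    exact hσ
  rw [← swap_mul_self_mul (e 0) (e 1) σ, trivialProdPermMatrix_mul]
  exact S.mul_mem (hS ⟨_, hτσ, rfl⟩) hτ

/-- For `n ≥ 4`, letting `ρ : Sₙ → ℂ ⊕ Mₙ(ℂ)` be the direct sum of the trivial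
representation and the permutation representation, the *-algebra generated by `ρ(Aₙ)`
equals the *-algebra generated by `ρ(Sₙ)`. -/
theorem starAlgebra_adjoin_alternating_eq_adjoin_symmetric (n : ℕ) (hn : 4 ≤ n) :
    StarAlgebra.adjoin ℂ
        ((fun σ : Equiv.Perm (Fin n) => (((1 : ℂ), σ.permMatrix ℂ) : ℂ × Matrix (Fin n) (Fin n) ℂ)) ''
          (alternatingGroup (Fin n) : Set (Equiv.Perm (Fin n)))) =
      StarAlgebra.adjoin ℂ
        (Set.range fun σ : Equiv.Perm (Fin n) =>
          (((1 : ℂ), σ.permMatrix ℂ) : ℂ × Matrix (Fin n) (Fin n) ℂ)) := by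
  refine le_antisymm (StarAlgebra.adjoin_mono (Set.image_subset_range _ _))
    (StarAlgebra.adjoin_le ?_)
  rintro _ ⟨σ, rfl⟩
  exact trivialProdPermMatrix_mem_of_image_alternatingGroup_subset (by simpa using hn)
    (S := (StarAlgebra.adjoin ℂ _).toSubalgebra) (StarAlgebra.subset_adjoin ℂ _) σ
end

section
/- Let T be a homeomorphism of a topological space X and A ⊆ X a clopen set such that A, T(A), …, T^{n−1}(A) are pairwise disjoint (A is n-disjoint). For σ in the symmetric group on {0,…,n−1}, define σ_A : X → X by σ_A(x) = T^{σ(i)−i}(x) if x ∈ T^i(A) for some 0 ≤ i < n, and σ_A(x) = x otherwise. Then σ_A is a well-defined homeomorphism of X, and the map σ ↦ σ_A is a group homomorphism from the symmetric group S_n into the homeomorphism group of X. -/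
/-- If `A` is a clopen `n`-disjoint set for a homeomorphism `T` (i.e. `A, T(A), …, Tⁿ⁻¹(A)`
are pairwise disjoint), then `σ ↦ σ_A` defines a group homomorphism from `Sₙ` into the
homeomorphism group of `X`, where `σ_A` acts by `T^(σ(i)-i)` on `Tⁱ(A)` and is the
identity elsewhere. -/
theorem exists_symmetricGroup_hom_of_nDisjoint
    (X : Type*) [TopologicalSpace X] (T : X ≃ₜ X) (n : ℕ) (A : Set X) (hA : IsClopen A)
    (hdisj : ∀ i j : Fin n, i ≠ j →
      Disjoint ((T.toEquiv ^ (i : ℤ)) '' A) ((T.toEquiv ^ (j : ℤ)) '' A)) :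
    ∃ Φ : Equiv.Perm (Fin n) →* Equiv.Perm X,
      ∀ σ : Equiv.Perm (Fin n),
        Continuous ⇑(Φ σ) ∧ Continuous ⇑(Φ σ).symm ∧
        (∀ i : Fin n, ∀ x ∈ (T.toEquiv ^ (i : ℤ)) '' A,
          Φ σ x = (T.toEquiv ^ ((σ i : ℤ) - (i : ℤ))) x) ∧
        ∀ x : X, x ∉ ⋃ i : Fin n, (T.toEquiv ^ (i : ℤ)) '' A → Φ σ x = x := by
  classical
  -- continuity of powers of T
  have hcN : ∀ m : ℕ, Continuous ⇑(T.toEquiv ^ m) ∧ Continuous ⇑(T.toEquiv ^ m)⁻¹ := by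
    intro m
    induction m with
    | zero => exact ⟨by simpa using continuous_id, by simpa using continuous_id⟩
    | succ m ih =>
      constructor
      · have : ⇑(T.toEquiv ^ (m + 1)) = ⇑(T.toEquiv ^ m) ∘ ⇑T.toEquiv := by
          funext x; simp [pow_succ, Equiv.Perm.mul_apply]
        rw [this]; exact ih.1.comp T.continuous
      · have : ⇑(T.toEquiv ^ (m + 1))⁻¹ = ⇑T.toEquiv⁻¹ ∘ ⇑(T.toEquiv ^ m)⁻¹ := by
          funext x; simp [pow_succ, mul_inv_rev, Equiv.Perm.mul_apply]
        rw [this]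
        have hT : Continuous ⇑T.toEquiv⁻¹ := by
          rw [Equiv.Perm.inv_def]; exact T.symm.continuous
        exact hT.comp ih.2
  have hcZ : ∀ k : ℤ, Continuous ⇑(T.toEquiv ^ k) := by
    intro k
    cases k with
    | ofNat m => rw [Int.ofNat_eq_coe, zpow_natCast]; exact (hcN m).1
    | negSucc m => rw [zpow_negSucc]; exact (hcN (m + 1)).2
  have hclopen : ∀ k : ℤ, IsClopen ((T.toEquiv ^ k) '' A) := by
    intro k
    rw [Equiv.image_eq_preimage_symm]
    have : ⇑(T.toEquiv ^ k).symm = ⇑(T.toEquiv ^ (-k)) := by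
      rw [← Equiv.Perm.inv_def, ← zpow_neg]
    rw [this]
    exact hA.preimage (hcZ (-k))
  set U : Set X := ⋃ i : Fin n, (T.toEquiv ^ (i : ℤ)) '' A with hU
  have hUclopen : IsClopen U := isClopen_iUnion_of_finite fun i => hclopen _
  -- the gluing equivalence
  let f : (Fin n × A) ⊕ (Uᶜ : Set X) → X := fun z =>
    match z with
    | .inl (i, a) => (T.toEquiv ^ (i : ℤ)) a
    | .inr x => x
  have hmemU : ∀ (i : Fin n) (a : A), (T.toEquiv ^ (i : ℤ)) (a : X) ∈ U := by
    intro i a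
    exact Set.mem_iUnion.mpr ⟨i, Set.mem_image_of_mem _ a.2⟩
  have hinj : Function.Injective f := by
    rintro (⟨i, a⟩ | x) (⟨j, b⟩ | y) h
    · simp only [f] at h
      by_cases hij : i = j
      · subst hij
        have : (a : X) = b := (T.toEquiv ^ (i : ℤ)).injective h
        simp [Subtype.ext this]
      · exfalso
        refine Set.disjoint_left.mp (hdisj i j hij) (Set.mem_image_of_mem _ a.2) ?_
        rw [h]
        exact Set.mem_image_of_mem _ b.2
    · exfalso
      have hm := hmemU i a
      simp only [f] at h
      rw [h] at hm
      exact y.2 hm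
    · exfalso
      have hm := hmemU j b
      simp only [f] at h
      rw [← h] at hm
      exact x.2 hm
    · simpa [f, Subtype.ext_iff] using h
  have hsurj : Function.Surjective f := by
    intro x
    by_cases hx : x ∈ U
    · obtain ⟨i, a, ha, rfl⟩ := Set.mem_iUnion.mp hx
      exact ⟨.inl (i, ⟨a, ha⟩), rfl⟩
    · exact ⟨.inr ⟨x, hx⟩, rfl⟩
  let E : ((Fin n × A) ⊕ (Uᶜ : Set X)) ≃ X := Equiv.ofBijective f ⟨hinj, hsurj⟩
  -- the inner homomorphism
  let Ψ : Equiv.Perm (Fin n) →* Equiv.Perm ((Fin n × A) ⊕ (Uᶜ : Set X)) :=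
    MonoidHom.mk' (fun σ => Equiv.sumCongr (Equiv.prodCongr σ (Equiv.refl A)) (Equiv.refl _))
      (by intro σ τ; ext z; rcases z with ⟨i, a⟩ | x <;> simp [Equiv.Perm.mul_apply])
  -- conjugation by E
  let Φ : Equiv.Perm (Fin n) →* Equiv.Perm X :=
    MonoidHom.mk' (fun σ => E.permCongr (Ψ σ))
      (by
        intro σ τ; ext x
        simp [Equiv.permCongr_apply, Equiv.Perm.mul_apply, map_mul])
  -- key evaluation lemmas
  have keyA : ∀ (σ : Equiv.Perm (Fin n)) (i : Fin n), ∀ x ∈ (T.toEquiv ^ (i : ℤ)) '' A,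
      Φ σ x = (T.toEquiv ^ ((σ i : ℤ) - (i : ℤ))) x := by
    intro σ i x hx
    obtain ⟨a, ha, rfl⟩ := hx
    have h2 : Φ σ ((T.toEquiv ^ (i : ℤ)) a) = (T.toEquiv ^ ((σ i : ℤ))) a := by
      have hE : E.symm ((T.toEquiv ^ (i : ℤ)) a) = .inl (i, ⟨a, ha⟩) :=
        Equiv.ofBijective_symm_apply_apply f ⟨hinj, hsurj⟩ (.inl (i, ⟨a, ha⟩))
      show E (Ψ σ (E.symm ((T.toEquiv ^ (i : ℤ)) a))) = _
      rw [hE]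
      rfl
    rw [h2, ← Equiv.Perm.mul_apply, ← zpow_add, sub_add_cancel]
  have keyC : ∀ (σ : Equiv.Perm (Fin n)), ∀ x : X, x ∉ U → Φ σ x = x := by
    intro σ x hx
    have hE : E.symm x = .inr ⟨x, hx⟩ :=
      Equiv.ofBijective_symm_apply_apply f ⟨hinj, hsurj⟩ (.inr ⟨x, hx⟩)
    show E (Ψ σ (E.symm x)) = x
    rw [hE]
    rfl
  have hcont : ∀ σ : Equiv.Perm (Fin n), Continuous ⇑(Φ σ) := by
    intro σ
    rw [continuous_iff_continuousAt]
    intro x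
    by_cases hx : x ∈ U
    · obtain ⟨i, hi⟩ := Set.mem_iUnion.mp hx
      have heq : ∀ᶠ y in nhds x, Φ σ y = (T.toEquiv ^ ((σ i : ℤ) - (i : ℤ))) y :=
        Filter.eventually_of_mem ((hclopen (i : ℤ)).isOpen.mem_nhds hi)
          (fun y hy => keyA σ i y hy)
      exact ((hcZ _).continuousAt).congr (Filter.EventuallyEq.symm heq)
    · have heq : ∀ᶠ y in nhds x, Φ σ y = y :=
        Filter.eventually_of_mem (hUclopen.compl.isOpen.mem_nhds hx)
          (fun y hy => keyC σ y hy)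
      exact continuousAt_id.congr (Filter.EventuallyEq.symm heq)
  refine ⟨Φ, fun σ => ⟨hcont σ, ?_, keyA σ, keyC σ⟩⟩
  have : ⇑(Φ σ).symm = ⇑(Φ σ⁻¹) := by
    rw [← Equiv.Perm.inv_def, ← map_inv]
  rw [this]
  exact hcont σ⁻¹
end

section
/- Let δ_0, δ_1, δ_{-1} be unitaries with δ_1 δ_{-1} = δ_0 = 1 in a unital C*-algebra containing a copy of C(X) (X compact), with δ_1 f δ_{-1} = f ∘ T^{-1} for a homeomorphism T of X. If A ⊆ X is clopen with A ∩ T(A) = ∅, then (1 − δ_1)·1_A·(1 − δ_{-1}) = 1 − (1_{(A ∪ T(A))^c} + 1_{T(A)} δ_1 + 1_A δ_{-1}), and the element 1_{(A∪T(A))^c} + 1_{T(A)}δ_1 + 1_A δ_{-1} is a unitary. -/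
/-!
Write `p = 1_A`, `q = 1_{T(A)}`, `r = 1_{(A ∪ T(A))ᶜ}`, `d = δ₁`, `e = δ₋₁`. These are
orthogonal projections summing to `1`, and covariance gives `d p = q d`. Expanding,
`(1 - d) p (1 - e) = 1 - (r + q d + p e)`, so the element `u = r + q d + p e` equals
`1 - w` with `w = z p z*`, `z = 1 - d`, which is self-adjoint. Finally `z* z = 2 - d - d*`
and `p d p = p d* p = 0` (because `d` moves `A` onto the disjoint set `T(A)`), so
`p z* z p = 2 p`, whence `w² = 2 w` and `u² = 1`: `u` is a self-adjoint unitary.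
-/

open scoped Classical

section CharacteristicFunctions

variable {X 𝕜 : Type*} [TopologicalSpace X] [TopologicalSpace 𝕜] [Semiring 𝕜]
  {f g h : C(X, 𝕜)} {s t : Set X}

theorem ContinuousMap.comp_symm_eq_of_eq_ite (T : X ≃ₜ X)
    (hf : ∀ x, f x = if x ∈ s then 1 else 0) (hg : ∀ x, g x = if x ∈ T '' s then 1 else 0) :
    f.comp (T.symm : C(X, X)) = g := by
  ext x
  simp [hf, hg, T.image_eq_preimage_symm]

theorem ContinuousMap.isSelfAdjoint_of_eq_ite [StarRing 𝕜] [ContinuousStar 𝕜]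
    (hf : ∀ x, f x = if x ∈ s then 1 else 0) : IsSelfAdjoint f := by
  ext x
  simp only [ContinuousMap.star_apply, hf x]
  split_ifs <;> simp

variable [IsTopologicalSemiring 𝕜]

theorem ContinuousMap.mul_self_of_eq_ite (hf : ∀ x, f x = if x ∈ s then 1 else 0) :
    f * f = f := by
  ext x
  simp only [ContinuousMap.mul_apply, hf x]
  split_ifs <;> simp

theorem ContinuousMap.mul_eq_zero_of_eq_ite_of_disjoint
    (hf : ∀ x, f x = if x ∈ s then 1 else 0) (hg : ∀ x, g x = if x ∈ t then 1 else 0)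
    (hst : Disjoint s t) : f * g = 0 := by
  ext x
  simp only [ContinuousMap.mul_apply, ContinuousMap.zero_apply, hf x, hg x]
  by_cases hs : x ∈ s
  · simp [hs, Set.disjoint_left.mp hst hs]
  · simp [hs]

theorem ContinuousMap.add_add_eq_one_of_eq_ite
    (hf : ∀ x, f x = if x ∈ s then 1 else 0) (hg : ∀ x, g x = if x ∈ t then 1 else 0)
    (hh : ∀ x, h x = if x ∈ (s ∪ t)ᶜ then 1 else 0) (hst : Disjoint s t) :
    f + g + h = 1 := by
  ext x
  simp only [ContinuousMap.add_apply, ContinuousMap.one_apply, hf x, hg x, hh x]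
  by_cases hs : x ∈ s
  · simp [hs, Set.disjoint_left.mp hst hs]
  · by_cases ht : x ∈ t <;> simp [hs, ht]

end CharacteristicFunctions

section SwapUnitary

variable {R : Type*} [Ring R] {p q r d e : R}

theorem one_sub_mul_mul_one_sub_eq_one_sub_swap (hsum : p + q + r = 1) (hde : d * e = 1)
    (hdp : d * p = q * d) :
    (1 - d) * p * (1 - e) = 1 - (r + q * d + p * e) := by
  have hdpe : d * p * e = q := by rw [hdp, mul_assoc, hde, mul_one]
  calc (1 - d) * p * (1 - e) = p - d * p - p * e + d * p * e := by noncomm_ring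
    _ = 1 - (r + q * d + p * e) := by rw [hdpe, hdp, ← hsum]; abel

theorem mul_self_one_sub_mul_mul_one_sub_eq_one (hp : p * p = p) (hpq : p * q = 0) (hqp : q * p = 0)
    (hde : d * e = 1) (hed : e * d = 1) (hdp : d * p = q * d) :
    (1 - (1 - d) * p * (1 - e)) * (1 - (1 - d) * p * (1 - e)) = 1 := by
  have hpe : p * e = e * q := by
    calc p * e = e * (d * p) * e := by rw [← mul_assoc e, hed, one_mul]
      _ = e * q := by rw [hdp, mul_assoc, mul_assoc, hde, mul_one]
  have hpdp : p * d * p = 0 := by rw [mul_assoc, hdp, ← mul_assoc, hpq, zero_mul]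
  have hpep : p * e * p = 0 := by rw [hpe, mul_assoc, hqp, mul_zero]
  have hmiddle : p * (1 - e) * (1 - d) * p = 2 * p := by
    calc p * (1 - e) * (1 - d) * p = p * p + p * (e * d) * p - p * e * p - p * d * p := by
          noncomm_ring
      _ = 2 * p := by rw [hed, mul_one, hp, hpep, hpdp]; noncomm_ring
  calc (1 - (1 - d) * p * (1 - e)) * (1 - (1 - d) * p * (1 - e))
      = 1 - 2 * ((1 - d) * p * (1 - e))
        + (1 - d) * (p * (1 - e) * (1 - d) * p) * (1 - e) := by noncomm_ring
    _ = 1 := by rw [hmiddle]; noncomm_ring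

end SwapUnitary

theorem IsSelfAdjoint.mem_unitary_of_mul_self_eq_one {R : Type*} [Monoid R] [StarMul R] {u : R}
    (hu : IsSelfAdjoint u) (h : u * u = 1) : u ∈ unitary R :=
  Unitary.mem_iff.mpr ⟨hu.star_eq.symm ▸ h, hu.star_eq.symm ▸ h⟩

theorem crossed_product_identity_and_unitary_general
    (X : Type*) [TopologicalSpace X] (T : X ≃ₜ X)
    (R : Type*) [CStarAlgebra R] (ι : C(X, ℂ) →⋆ₐ[ℂ] R)
    (d₁ dm : R) (hu₁ : d₁ ∈ unitary R)
    (hinv : d₁ * dm = 1) (hinv' : dm * d₁ = 1)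
    (hcov : ∀ f : C(X, ℂ), d₁ * ι f * dm = ι (f.comp (T.symm : C(X, X))))
    (A : Set X) (hdisj : A ∩ (⇑T '' A) = ∅)
    (χA χTA χC : C(X, ℂ))
    (hχA : ∀ x : X, χA x = if x ∈ A then 1 else 0)
    (hχTA : ∀ x : X, χTA x = if x ∈ ⇑T '' A then 1 else 0)
    (hχC : ∀ x : X, χC x = if x ∈ (A ∪ ⇑T '' A)ᶜ then 1 else 0) :
    (1 - d₁) * ι χA * (1 - dm) = 1 - (ι χC + ι χTA * d₁ + ι χA * dm) ∧
      (ι χC + ι χTA * d₁ + ι χA * dm) ∈ unitary R := by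
  have hA : Disjoint A (T '' A) := Set.disjoint_iff_inter_eq_empty.mpr hdisj
  have hp : ι χA * ι χA = ι χA := by rw [← map_mul, ContinuousMap.mul_self_of_eq_ite hχA]
  have hpq : ι χA * ι χTA = 0 := by
    rw [← map_mul, ContinuousMap.mul_eq_zero_of_eq_ite_of_disjoint hχA hχTA hA, map_zero]
  have hqp : ι χTA * ι χA = 0 := by
    rw [← map_mul, ContinuousMap.mul_eq_zero_of_eq_ite_of_disjoint hχTA hχA hA.symm, map_zero]
  have hsum : ι χA + ι χTA + ι χC = 1 := by
    rw [← map_add, ← map_add, ContinuousMap.add_add_eq_one_of_eq_ite hχA hχTA hχC hA, map_one]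
  have hdp : d₁ * ι χA = ι χTA * d₁ := by
    calc d₁ * ι χA = d₁ * ι χA * dm * d₁ := by rw [mul_assoc _ dm, hinv', mul_one]
      _ = ι χTA * d₁ := by rw [hcov, ContinuousMap.comp_symm_eq_of_eq_ite T hχA hχTA]
  have hdm : dm = star d₁ := (left_inv_eq_right_inv (Unitary.star_mul_self_of_mem hu₁) hinv).symm
  have hid := one_sub_mul_mul_one_sub_eq_one_sub_swap hsum hinv hdp
  refine ⟨hid, ?_⟩
  rw [← sub_sub_cancel 1 (ι χC + _ + _), ← hid]
  refine IsSelfAdjoint.mem_unitary_of_mul_self_eq_one ?_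
    (mul_self_one_sub_mul_mul_one_sub_eq_one hp hpq hqp hinv hinv' hdp)
  rw [hdm, ← star_one, ← star_sub, star_one]
  exact (IsSelfAdjoint.one R).sub
    (((ContinuousMap.isSelfAdjoint_of_eq_ite hχA).map ι).conjugate _)

/-- In a unital C*-algebra containing a copy `ι` of `C(X)` and unitaries `δ₁, δ₋₁`
(with `δ₁δ₋₁ = δ₋₁δ₁ = 1`) implementing a homeomorphism `T` via the covariance relation
`δ₁ ι(f) δ₋₁ = ι(f ∘ T⁻¹)`, if `A ⊆ X` is clopen with `A ∩ T(A) = ∅` then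
`(1 - δ₁)·1_A·(1 - δ₋₁) = 1 - (1_{(A ∪ T(A))ᶜ} + 1_{T(A)} δ₁ + 1_A δ₋₁)`, and
`1_{(A ∪ T(A))ᶜ} + 1_{T(A)} δ₁ + 1_A δ₋₁` is a unitary. -/
theorem crossed_product_identity_and_unitary
    (X : Type*) [TopologicalSpace X] [CompactSpace X] (T : X ≃ₜ X)
    (R : Type*) [CStarAlgebra R] (ι : C(X, ℂ) →⋆ₐ[ℂ] R)
    (d₁ dm : R) (hu₁ : d₁ ∈ unitary R) (hum : dm ∈ unitary R)
    (hinv : d₁ * dm = 1) (hinv' : dm * d₁ = 1)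
    (hcov : ∀ f : C(X, ℂ), d₁ * ι f * dm = ι (f.comp (T.symm : C(X, X))))
    (A : Set X) (hA : IsClopen A) (hdisj : A ∩ (⇑T '' A) = ∅)
    (χA χTA χC : C(X, ℂ))
    (hχA : ∀ x : X, χA x = if x ∈ A then 1 else 0)
    (hχTA : ∀ x : X, χTA x = if x ∈ ⇑T '' A then 1 else 0)
    (hχC : ∀ x : X, χC x = if x ∈ (A ∪ ⇑T '' A)ᶜ then 1 else 0) :
    (1 - d₁) * ι χA * (1 - dm) = 1 - (ι χC + ι χTA * d₁ + ι χA * dm) ∧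
      (ι χC + ι χTA * d₁ + ι χA * dm) ∈ unitary R :=
  crossed_product_identity_and_unitary_general X T R ι d₁ dm hu₁ hinv hinv' hcov A hdisj χA χTA χC
    hχA hχTA hχC
end
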